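/- arXiv:2305.16909 — 2 statements merged into one kernel-verified Lean document; each statement's English description precedes it below -/
import Mathlib

section
/- Let S ⊆ ℝⁿ be a nonempty convex set with homogenization homog(S) = cl(cone(S × {1})). Then the intersection of homog(S) with the hyperplane {(x, μ) : μ = 1}, projected onto the first n coordinates, equals the closure of S. -/
/-- The conical hull (including `0`) of a set. -/
def coneOf {E : Type*} [AddCommGroup E] [Module ℝ E] (A : Set E) : Set E :=
  {y | ∃ l : ℝ, 0 ≤ l ∧ ∃ a ∈ convexHull ℝ A, y = l • a}

/-- The homogenization of `S ⊆ ℝⁿ`, a subset of `ℝⁿ × ℝ ≅ ℝ^{n+1}`. -/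
def homog {n : ℕ} (S : Set (Fin n → ℝ)) : Set ((Fin n → ℝ) × ℝ) :=
  closure (coneOf ((fun x => (x, (1 : ℝ))) '' S))

/-!
A point `(x, 1)` of the closed cone over `S × {1}` is a limit of points `l • (s, 1)` with `s ∈ S`
(the cone over a convex set needs no convex combinations). Near `(x, 1)` the last coordinate `l`
is nonzero, and dehomogenizing, `q ↦ q.2⁻¹ • q.1`, sends such points back to `s ∈ S`; since this
map is continuous at `(x, 1)`, it carries the approximation to one of `x` by points of `S`.
-/

section Dehomogenization

open Filter Topology

variable {E : Type*} [AddCommGroup E] [Module ℝ E]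

theorem subset_coneOf (A : Set E) : A ⊆ coneOf A :=
  fun a ha => ⟨1, zero_le_one, a, subset_convexHull ℝ A ha, (one_smul ℝ a).symm⟩

theorem Convex.inv_snd_smul_fst_mem_of_mem_coneOf {S : Set E} (hS : Convex ℝ S)
    {q : E × ℝ} (hq : q ∈ coneOf (S ×ˢ {(1 : ℝ)})) (hq₂ : q.2 ≠ 0) : q.2⁻¹ • q.1 ∈ S := by
  obtain ⟨l, -, a, ha, rfl⟩ := hq
  rw [(hS.prod (convex_singleton 1)).convexHull_eq] at ha
  obtain ⟨hs, ha₂ : a.2 = 1⟩ := ha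
  simp only [Prod.smul_fst, Prod.smul_snd, ha₂, smul_eq_mul, mul_one] at hq₂ ⊢
  rwa [smul_smul, inv_mul_cancel₀ hq₂, one_smul]

variable [TopologicalSpace E] [ContinuousSMul ℝ E]

theorem Convex.fst_mem_closure_of_mem_closure_coneOf {S : Set E} (hS : Convex ℝ S)
    {p : E × ℝ} (hp : p ∈ closure (coneOf (S ×ˢ {(1 : ℝ)}))) (hp₂ : p.2 = 1) :
    p.1 ∈ closure S := by
  have : (𝓝[coneOf (S ×ˢ {(1 : ℝ)})] p).NeBot := mem_closure_iff_nhdsWithin_neBot.1 hp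
  have hcont : ContinuousAt (fun q : E × ℝ => q.2⁻¹ • q.1) p :=
    (continuousAt_snd.inv₀ (by simp [hp₂])).smul continuousAt_fst
  have hlim : Tendsto (fun q : E × ℝ => q.2⁻¹ • q.1)
      (𝓝[coneOf (S ×ˢ {(1 : ℝ)})] p) (𝓝 p.1) := by
    simpa [hp₂] using hcont.tendsto.mono_left nhdsWithin_le_nhds
  have hne : ∀ᶠ q in 𝓝 p, q.2 ≠ (0 : ℝ) :=
    continuousAt_snd.eventually_ne (by simp [hp₂])
  refine mem_closure_of_tendsto hlim ?_
  filter_upwards [self_mem_nhdsWithin, nhdsWithin_le_nhds hne] with q hq hq₂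
  exact hS.inv_snd_smul_fst_mem_of_mem_coneOf hq hq₂

theorem Convex.image_fst_closure_coneOf_inter_snd_eq_one {S : Set E} (hS : Convex ℝ S) :
    Prod.fst '' (closure (coneOf (S ×ˢ {(1 : ℝ)})) ∩ {p | p.2 = 1}) = closure S := by
  ext x
  constructor
  · rintro ⟨p, ⟨hp, hp₂⟩, rfl⟩
    exact hS.fst_mem_closure_of_mem_closure_coneOf hp hp₂
  · intro hx
    have hx₁ : (x, (1 : ℝ)) ∈ closure (S ×ˢ {(1 : ℝ)}) := by
      rw [closure_prod_eq]
      exact ⟨hx, subset_closure rfl⟩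
    exact ⟨(x, 1), ⟨closure_mono (subset_coneOf _) hx₁, rfl⟩, rfl⟩

end Dehomogenization

theorem stmt_9_general (n : ℕ) (S : Set (Fin n → ℝ))
    (hconv : Convex ℝ S) :
    Prod.fst '' (homog S ∩ {p : (Fin n → ℝ) × ℝ | p.2 = 1}) = closure S := by
  rw [homog, ← Set.prod_singleton]
  exact hconv.image_fst_closure_coneOf_inter_snd_eq_one

theorem stmt_9 (n : ℕ) (S : Set (Fin n → ℝ)) (hne : S.Nonempty)
    (hconv : Convex ℝ S) :
    Prod.fst '' (homog S ∩ {p : (Fin n → ℝ) × ℝ | p.2 = 1}) = closure S :=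
  stmt_9_general n S hconv
end

section
/- The set S = {x ∈ ℝ² : ∃ y ∈ ℝ², [[x₁ − y₁, 1],[1, x₂ − y₂]] ⪰ 0 and [[y₂, y₁],[y₁, 1]] ⪰ 0} equals the Minkowski sum E₁ + E₂, where E₁ = {(a,b) : a > 0, b ≥ 1/a} is the epigraph of x ↦ x⁻¹ on the positive reals and E₂ = {(a,b) : b ≥ a²} is the epigraph of x ↦ x². -/
open Pointwise

namespace Matrix

section TwoByTwo

variable {R : Type*} [CommRing R] [StarRing R] [TrivialStar R]

lemma star_dotProduct_mulVec_fin_two (p q r : R) (x : Fin 2 → R) :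
    star x ⬝ᵥ (!![p, q; q, r] *ᵥ x) = p * x 0 ^ 2 + 2 * q * x 0 * x 1 + r * x 1 ^ 2 := by
  simp only [star_trivial, dotProduct, mulVec, Fin.sum_univ_two, cons_val', cons_val_zero,
    cons_val_one, empty_val', cons_val_fin_one, of_apply]
  ring

variable [LinearOrder R] [IsStrictOrderedRing R]

lemma posSemidef_fin_two_iff (p q r : R) :
    (!![p, q; q, r] : Matrix (Fin 2) (Fin 2) R).PosSemidef ↔
      0 ≤ p ∧ 0 ≤ r ∧ q ^ 2 ≤ p * r := by
  have hHerm : (!![p, q; q, r] : Matrix (Fin 2) (Fin 2) R).IsHermitian := by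
    rw [isHermitian_iff_isSymm]
    ext i j
    fin_cases i <;> fin_cases j <;> rfl
  simp only [posSemidef_iff_dotProduct_mulVec, hHerm, true_and, star_dotProduct_mulVec_fin_two]
  constructor
  · intro hQ
    have h10 := hQ ![1, 0]
    have h01 := hQ ![0, 1]
    have h11 := hQ ![1, 1]
    have h1m := hQ ![1, -1]
    -- With `Q` the quadratic form, `Q(q, -p) + Q(r, -q) = (p + r) (p r - q²)`,
    -- and when `p + r = 0`, `Q(1, 1)` and `Q(1, -1)` force `q = 0`.
    have hqp := hQ ![q, -p]
    have hrq := hQ ![r, -q]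
    simp only [cons_val_zero, cons_val_one] at h10 h01 h11 h1m hqp hrq
    refine ⟨by linarith, by linarith, ?_⟩
    rcases (add_nonneg (by linarith : 0 ≤ p) (by linarith : 0 ≤ r)).eq_or_lt with hpr | hpr
    · nlinarith
    · exact le_of_sub_nonneg (nonneg_of_mul_nonneg_right (by linarith) hpr)
  · rintro ⟨hp, hr, hqpr⟩ x
    -- `(p + r) Q(x, y) = (p x + q y)² + (q x + r y)² + (p r - q²)(x² + y²)`
    rcases (add_nonneg hp hr).eq_or_lt with hpr | hpr
    · obtain ⟨rfl, rfl⟩ : p = 0 ∧ r = 0 := ⟨by linarith, by linarith⟩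
      obtain rfl : q = 0 := by nlinarith
      simp
    · nlinarith [sq_nonneg (p * x 0 + q * x 1), sq_nonneg (q * x 0 + r * x 1),
        mul_nonneg (sub_nonneg.2 hqpr) (add_nonneg (sq_nonneg (x 0)) (sq_nonneg (x 1)))]

lemma posSemidef_fin_two_iff_sq_le (a b : R) :
    (!![b, a; a, 1] : Matrix (Fin 2) (Fin 2) R).PosSemidef ↔ a ^ 2 ≤ b := by
  rw [posSemidef_fin_two_iff, mul_one]
  exact ⟨fun h ↦ h.2.2, fun h ↦ ⟨(sq_nonneg a).trans h, zero_le_one, h⟩⟩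

end TwoByTwo

lemma posSemidef_fin_two_iff_inv_le {K : Type*} [Field K] [LinearOrder K] [IsStrictOrderedRing K]
    [StarRing K] [TrivialStar K] (a b : K) :
    (!![a, 1; 1, b] : Matrix (Fin 2) (Fin 2) K).PosSemidef ↔ 0 < a ∧ 1 / a ≤ b := by
  rw [posSemidef_fin_two_iff, one_pow]
  constructor
  · rintro ⟨ha, -, hab⟩
    have ha : 0 < a := ha.lt_of_ne (by rintro rfl; linarith)
    exact ⟨ha, (div_le_iff₀' ha).2 hab⟩
  · rintro ⟨ha, hab⟩
    have hab := (div_le_iff₀' ha).1 hab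
    exact ⟨ha.le, nonneg_of_mul_nonneg_right (zero_le_one.trans hab) ha, hab⟩

end Matrix

lemma Set.mem_add_iff_exists_sub_mem {G : Type*} [AddGroup G] {s t : Set G} {x : G} :
    x ∈ s + t ↔ ∃ y ∈ t, x - y ∈ s := by
  constructor
  · rintro ⟨a, ha, b, hb, rfl⟩
    exact ⟨b, hb, by rwa [add_sub_cancel_right]⟩
  · rintro ⟨y, hy, h⟩
    exact ⟨x - y, h, y, hy, sub_add_cancel x y⟩

theorem stmt_19 :
    {x : ℝ × ℝ | ∃ y : ℝ × ℝ,
        (!![x.1 - y.1, 1; 1, x.2 - y.2] : Matrix (Fin 2) (Fin 2) ℝ).PosSemidef ∧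
        (!![y.2, y.1; y.1, 1] : Matrix (Fin 2) (Fin 2) ℝ).PosSemidef} =
      {p : ℝ × ℝ | 0 < p.1 ∧ 1 / p.1 ≤ p.2} + {p : ℝ × ℝ | p.1 ^ 2 ≤ p.2} := by
  ext x
  simp only [Set.mem_add_iff_exists_sub_mem, Set.mem_ofPred_eq, Prod.fst_sub, Prod.snd_sub,
    Matrix.posSemidef_fin_two_iff_inv_le, Matrix.posSemidef_fin_two_iff_sq_le]
  exact exists_congr fun _ ↦ and_comm
end
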